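/- arXiv:1606.05719 — 8 statements merged into one kernel-verified Lean document; each statement's English description precedes it below -/
import Mathlib

section
/- For a passive linear quantum system, the uncontrollable subspace and the unobservable subspace are identical: ⋂_{k=0}^{n-1} Ker((A^k B)ᴴ) = ⋂_{k=0}^{n-1} Ker(C A^k). -/
open Matrix Polynomial

private lemma sum_mulVec' {n : ℕ} (s : Finset ℕ) (f : ℕ → Matrix (Fin n) (Fin n) ℂ)
    (x : Fin n → ℂ) : (∑ i ∈ s, f i) *ᵥ x = ∑ i ∈ s, f i *ᵥ x := by
  induction s using Finset.cons_induction with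
  | empty => simp
  | cons a s ha ih => simp [Finset.sum_insert ha, Matrix.add_mulVec, ih]

private lemma obs_ext {n m : ℕ} (hn : 0 < n)
    (A : Matrix (Fin n) (Fin n) ℂ) (C : Matrix (Fin m) (Fin n) ℂ)
    (x : Fin n → ℂ) (hx : ∀ i < n, C *ᵥ (A ^ i *ᵥ x) = 0) :
    ∀ k, C *ᵥ (A ^ k *ᵥ x) = 0 := by
  intro k
  have hmon := A.charpoly_monic
  have hdeg : ((X : ℂ[X]) ^ k %ₘ A.charpoly).natDegree < n := by
    have h := Polynomial.degree_modByMonic_lt ((X : ℂ[X]) ^ k) hmon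
    rw [A.charpoly_degree_eq_dim, Fintype.card_fin] at h
    rcases eq_or_ne ((X : ℂ[X]) ^ k %ₘ A.charpoly) 0 with h0 | h0
    · simpa [h0] using hn
    · exact (Polynomial.natDegree_lt_iff_degree_lt h0).2 h
  rw [Matrix.pow_eq_aeval_mod_charpoly, Polynomial.aeval_eq_sum_range' hdeg,
    sum_mulVec']
  change C.mulVecLin _ = 0
  rw [map_sum]
  refine Finset.sum_eq_zero fun i hi => ?_
  rw [Matrix.smul_mulVec, _root_.map_smul, Matrix.mulVecLin_apply,
    hx i (Finset.mem_range.mp hi), smul_zero]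

private lemma swap_lemma {n m : ℕ}
    (A : Matrix (Fin n) (Fin n) ℂ) (C : Matrix (Fin m) (Fin n) ℂ)
    (hAC : Aᴴ = -A - Cᴴ * C)
    (x : Fin n → ℂ) (hx : ∀ k, C *ᵥ (A ^ k *ᵥ x) = 0) :
    ∀ k, C *ᵥ (Aᴴ ^ k *ᵥ x) = 0 := by
  have key : ∀ k, Aᴴ ^ k *ᵥ x = ((-1 : ℂ) ^ k) • (A ^ k *ᵥ x) := by
    intro k
    induction k with
    | zero => simp
    | succ k ih =>
      have h1 : Aᴴ ^ (k + 1) *ᵥ x = Aᴴ *ᵥ (Aᴴ ^ k *ᵥ x) := by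
        rw [pow_succ', Matrix.mulVec_mulVec]
      rw [h1, ih, Matrix.mulVec_smul, hAC]
      have h2 : (-A - Cᴴ * C) *ᵥ (A ^ k *ᵥ x) = -(A ^ (k + 1) *ᵥ x) := by
        rw [Matrix.sub_mulVec, Matrix.neg_mulVec, ← Matrix.mulVec_mulVec, hx k,
          Matrix.mulVec_zero, sub_zero, Matrix.mulVec_mulVec, ← pow_succ']
      rw [h2, pow_succ]
      module
  intro k
  rw [key k, Matrix.mulVec_smul, hx k, smul_zero]

/-- **Theorem 1 (passive Kalman).** For a passive linear quantum system with
`A = -iΩ - (1/2)CᴴC`, `B = -Cᴴ` (`Ω` Hermitian), the uncontrollable subspace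
`⋂_{k<n} Ker((AᵏB)ᴴ)` equals the unobservable subspace `⋂_{k<n} Ker(C Aᵏ)`. -/
theorem passive_uncontrollable_eq_unobservable
    (n m : ℕ) (hn : 0 < n) (hm : 0 < m)
    (Ω : Matrix (Fin n) (Fin n) ℂ) (hΩ : Ω.IsHermitian)
    (C : Matrix (Fin m) (Fin n) ℂ)
    (A : Matrix (Fin n) (Fin n) ℂ)
    (hA : A = (-Complex.I) • Ω - (1 / 2 : ℂ) • (Cᴴ * C))
    (B : Matrix (Fin n) (Fin m) ℂ) (hB : B = -Cᴴ) :
    (⨅ k ∈ Finset.range n, LinearMap.ker ((A ^ k * B)ᴴ.mulVecLin)) =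
      ⨅ k ∈ Finset.range n, LinearMap.ker ((C * A ^ k).mulVecLin) := by
  have hCC : (Cᴴ * C).IsHermitian := Matrix.isHermitian_conjTranspose_mul_self C
  have hAC : Aᴴ = -A - Cᴴ * C := by
    rw [hA]
    rw [Matrix.conjTranspose_sub, Matrix.conjTranspose_smul, Matrix.conjTranspose_smul,
      hΩ.eq, hCC.eq]
    simp only [neg_smul, starRingEnd_apply]
    rw [show star (-Complex.I) = Complex.I by simp, show star (1/2 : ℂ) = (1/2 : ℂ) by
      simp [star_div₀]]
    module
  have hAC' : (Aᴴ)ᴴ = -(Aᴴ) - Cᴴ * C := by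
    rw [Matrix.conjTranspose_conjTranspose, hAC]
    noncomm_ring
  have hBH : ∀ k, (A ^ k * B)ᴴ = (-C) * (Aᴴ) ^ k := by
    intro k
    rw [hB, Matrix.conjTranspose_mul, Matrix.conjTranspose_neg,
      Matrix.conjTranspose_conjTranspose, Matrix.conjTranspose_pow]
  ext x
  simp only [Submodule.mem_iInf, LinearMap.mem_ker, Matrix.mulVecLin_apply,
    Finset.mem_range]
  constructor
  · intro h k hk
    have h' : ∀ j < n, C *ᵥ (Aᴴ ^ j *ᵥ x) = 0 := by
      intro j hj
      have := h j hj
      rw [hBH j, ← Matrix.mulVec_mulVec, Matrix.neg_mulVec, neg_eq_zero] at this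
      exact this
    have hall := obs_ext hn Aᴴ C x h'
    have hA' := swap_lemma Aᴴ C hAC' x hall
    rw [Matrix.conjTranspose_conjTranspose] at hA'
    rw [← Matrix.mulVec_mulVec]
    exact hA' k
  · intro h k hk
    have h' : ∀ j < n, C *ᵥ (A ^ j *ᵥ x) = 0 := by
      intro j hj
      have := h j hj
      rwa [← Matrix.mulVec_mulVec] at this
    have hall := obs_ext hn A C x h'
    have hAH := swap_lemma A C hAC x hall
    rw [hBH k, ← Matrix.mulVec_mulVec, Matrix.neg_mulVec, hAH k, neg_zero]
end

section
/- For a passive linear quantum system, the unobservable subspace is determined by C and Ω alone: ⋂_{k=0}^{n-1} Ker(C A^k) = ⋂_{k=0}^{n-1} Ker(C Ω^k). -/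
/-! The unobservable subspace of `(C, M)`, the intersection of all `Ker (C Mᵏ)`, is the largest
`M`-invariant subspace of `Ker C`. On `Ker C` the matrix `A = -iΩ - ½ CᴴC` acts as `-iΩ`, so a
subspace of `Ker C` is `A`-invariant iff it is `Ω`-invariant. Cayley–Hamilton shows that the
exponents `k < n` already cut out the whole intersection. -/

open Matrix Polynomial

namespace Matrix

variable {ι κ R : Type*} [Fintype ι] [DecidableEq ι] [CommRing R]

def unobservableSubspace (C : Matrix κ ι R) (M : Matrix ι ι R) : Submodule R (ι → R) :=
  ⨅ k : ℕ, LinearMap.ker (C * M ^ k).mulVecLin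

variable {C : Matrix κ ι R} {M : Matrix ι ι R}

theorem mem_unobservableSubspace {x : ι → R} :
    x ∈ unobservableSubspace C M ↔ ∀ k : ℕ, (C * M ^ k) *ᵥ x = 0 := by
  simp [unobservableSubspace]

theorem unobservableSubspace_le_ker : unobservableSubspace C M ≤ LinearMap.ker C.mulVecLin :=
  fun x hx ↦ by simpa using mem_unobservableSubspace.1 hx 0

theorem mulVec_mem_unobservableSubspace {x : ι → R} (hx : x ∈ unobservableSubspace C M) :
    M *ᵥ x ∈ unobservableSubspace C M :=
  mem_unobservableSubspace.2 fun k ↦ by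
    rw [mulVec_mulVec, Matrix.mul_assoc, ← pow_succ]
    exact mem_unobservableSubspace.1 hx (k + 1)

theorem le_unobservableSubspace {W : Submodule R (ι → R)} (hWC : W ≤ LinearMap.ker C.mulVecLin)
    (hWM : ∀ x ∈ W, M *ᵥ x ∈ W) : W ≤ unobservableSubspace C M := by
  have hpow : ∀ k : ℕ, ∀ x ∈ W, M ^ k *ᵥ x ∈ W := by
    intro k
    induction k with
    | zero => simp
    | succ k ih => exact fun x hx ↦ by simpa [pow_succ', ← mulVec_mulVec] using hWM _ (ih x hx)
  exact fun x hx ↦ mem_unobservableSubspace.2 fun k ↦ by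
    simpa [← mulVec_mulVec] using hWC (hpow k x hx)

theorem mul_aeval_mulVec_eq_zero [Nontrivial R] {p : R[X]} (hp : p.degree < Fintype.card ι)
    {x : ι → R} (hx : ∀ i < Fintype.card ι, (C * M ^ i) *ᵥ x = 0) :
    (C * aeval M p) *ᵥ x = 0 := by
  rw [aeval_eq_sum_range, Matrix.mul_sum, sum_mulVec]
  refine Finset.sum_eq_zero fun i _ ↦ ?_
  rw [Matrix.mul_smul, smul_mulVec]
  by_cases hi : i < Fintype.card ι
  · rw [hx i hi, smul_zero]
  · rw [coeff_eq_zero_of_degree_lt (hp.trans_le (by exact_mod_cast not_lt.1 hi)), zero_smul]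

theorem iInf_range_card_ker_mul_pow [Nontrivial R] :
    ⨅ k ∈ Finset.range (Fintype.card ι), LinearMap.ker (C * M ^ k).mulVecLin =
      unobservableSubspace C M := by
  refine le_antisymm (fun x hx ↦ mem_unobservableSubspace.2 fun k ↦ ?_)
    (le_iInf₂ fun k _ ↦ iInf_le _ k)
  simp only [Submodule.mem_iInf, LinearMap.mem_ker, mulVecLin_apply, Finset.mem_range] at hx
  rw [pow_eq_aeval_mod_charpoly]
  refine mul_aeval_mulVec_eq_zero ?_ hx
  rw [← charpoly_degree_eq_dim M]
  exact degree_modByMonic_lt _ M.charpoly_monic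

theorem unobservableSubspace_le_smul_add_mul [Fintype κ] (c : R) (B : Matrix ι κ R) :
    unobservableSubspace C M ≤ unobservableSubspace C (c • M + B * C) :=
  le_unobservableSubspace unobservableSubspace_le_ker fun x hx ↦ by
    have hCx : C *ᵥ x = 0 := unobservableSubspace_le_ker hx
    rw [add_mulVec, smul_mulVec, ← mulVec_mulVec, hCx, mulVec_zero, add_zero]
    exact Submodule.smul_mem _ c (mulVec_mem_unobservableSubspace hx)

theorem unobservableSubspace_smul_add_mul [Fintype κ] {c : R} (hc : IsUnit c)
    (B : Matrix ι κ R) : unobservableSubspace C (c • M + B * C) = unobservableSubspace C M := by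
  obtain ⟨u, rfl⟩ := hc
  have hM : M = (↑u⁻¹ : R) • ((u : R) • M + B * C) + (-(↑u⁻¹ : R) • B) * C := by
    rw [smul_add, smul_smul, Units.inv_mul, one_smul, Matrix.smul_mul, add_assoc, ← add_smul,
      add_neg_cancel, zero_smul, add_zero]
  refine le_antisymm ?_ (unobservableSubspace_le_smul_add_mul _ B)
  conv_rhs => rw [hM]
  exact unobservableSubspace_le_smul_add_mul _ _

end Matrix

theorem passive_unobservable_eq_ker_C_Omega_general
    (n m : ℕ)
    (Ω : Matrix (Fin n) (Fin n) ℂ)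
    (C : Matrix (Fin m) (Fin n) ℂ)
    (A : Matrix (Fin n) (Fin n) ℂ)
    (hA : A = (-Complex.I) • Ω - (1 / 2 : ℂ) • (Cᴴ * C)) :
    (⨅ k ∈ Finset.range n, LinearMap.ker ((C * A ^ k).mulVecLin)) =
      ⨅ k ∈ Finset.range n, LinearMap.ker ((C * Ω ^ k).mulVecLin) := by
  have hA' : A = (-Complex.I) • Ω + (-(1 / 2 : ℂ) • Cᴴ) * C := by
    rw [hA, sub_eq_add_neg, ← neg_smul, Matrix.smul_mul]
  have hU (M : Matrix (Fin n) (Fin n) ℂ) : ⨅ k ∈ Finset.range n,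
      LinearMap.ker (C * M ^ k).mulVecLin = unobservableSubspace C M := by
    simpa only [Fintype.card_fin] using iInf_range_card_ker_mul_pow (C := C) (M := M)
  rw [hU, hU, hA', unobservableSubspace_smul_add_mul (neg_ne_zero.2 Complex.I_ne_zero).isUnit]

/-- For a passive linear quantum system with `A = -iΩ - (1/2)CᴴC` (`Ω` Hermitian),
the unobservable subspace is determined by `C` and `Ω` alone:
`⋂_{k<n} Ker(C Aᵏ) = ⋂_{k<n} Ker(C Ωᵏ)`. -/
theorem passive_unobservable_eq_ker_C_Omega
    (n m : ℕ) (hn : 0 < n) (hm : 0 < m)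
    (Ω : Matrix (Fin n) (Fin n) ℂ) (hΩ : Ω.IsHermitian)
    (C : Matrix (Fin m) (Fin n) ℂ)
    (A : Matrix (Fin n) (Fin n) ℂ)
    (hA : A = (-Complex.I) • Ω - (1 / 2 : ℂ) • (Cᴴ * C))
    (B : Matrix (Fin n) (Fin m) ℂ) (hB : B = -Cᴴ) :
    (⨅ k ∈ Finset.range n, LinearMap.ker ((C * A ^ k).mulVecLin)) =
      ⨅ k ∈ Finset.range n, LinearMap.ker ((C * Ω ^ k).mulVecLin) :=
  passive_unobservable_eq_ker_C_Omega_general n m Ω C A hA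
end

section
/- If λ ∈ ℂ satisfies Re λ = 0 and μ ∈ ℂ^n satisfies A μ = λ μ, then C μ = 0 and Ω μ = i λ μ; in particular, μ belongs to the unobservable subspace ⋂_{k=0}^{n-1} Ker(C A^k). -/
open Matrix

/-- For a passive linear quantum system with `A = -iΩ - (1/2)CᴴC` (`Ω` Hermitian):
if `Re λ = 0` and `A μ = λ μ`, then `C μ = 0`, `Ω μ = iλ μ`, and `μ` lies in the
unobservable subspace `⋂_{k<n} Ker(C Aᵏ)`. -/
theorem passive_imaginary_eigenvector_unobservable
    (n m : ℕ) (hn : 0 < n) (hm : 0 < m)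
    (Ω : Matrix (Fin n) (Fin n) ℂ) (hΩ : Ω.IsHermitian)
    (C : Matrix (Fin m) (Fin n) ℂ)
    (A : Matrix (Fin n) (Fin n) ℂ)
    (hA : A = (-Complex.I) • Ω - (1 / 2 : ℂ) • (Cᴴ * C))
    (B : Matrix (Fin n) (Fin m) ℂ) (hB : B = -Cᴴ)
    (lam : ℂ) (hlam : lam.re = 0) (μ : Fin n → ℂ) (hμ : A *ᵥ μ = lam • μ) :
    C *ᵥ μ = 0 ∧ Ω *ᵥ μ = (Complex.I * lam) • μ ∧
      μ ∈ ⨅ k ∈ Finset.range n, LinearMap.ker ((C * A ^ k).mulVecLin) := by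
  set a : ℂ := star μ ⬝ᵥ (Ω *ᵥ μ) with ha
  have h2 : star a = a := by
    rw [ha]
    nth_rewrite 1 [star_dotProduct]
    rw [star_star, star_mulVec, ← dotProduct_mulVec, hΩ.eq]
  have haim : a.im = 0 := by
    have := congrArg Complex.im h2
    simp at this
    linarith
  have h3 : ∀ (k : ℕ) (v : Fin k → ℂ),
      star v ⬝ᵥ v = ((∑ i, Complex.normSq (v i) : ℝ) : ℂ) := by
    intro k v
    simp [dotProduct, Complex.normSq_eq_conj_mul_self]
  have h1 : star μ ⬝ᵥ ((Cᴴ * C) *ᵥ μ) = ((∑ i, Complex.normSq ((C *ᵥ μ) i) : ℝ) : ℂ) := by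
    rw [← mulVec_mulVec, dotProduct_mulVec, ← star_mulVec, h3]
  set S : ℝ := ∑ i, Complex.normSq ((C *ᵥ μ) i) with hS
  set T : ℝ := ∑ i, Complex.normSq (μ i) with hT
  have heq : -Complex.I * a - (1 / 2 : ℂ) * (S : ℂ) = lam * (T : ℂ) := by
    have e1 : star μ ⬝ᵥ (A *ᵥ μ) = lam * (T : ℂ) := by
      rw [hμ, dotProduct_smul, smul_eq_mul, h3]
    rw [← e1, hA, sub_mulVec, smul_mulVec, smul_mulVec, dotProduct_sub,
      dotProduct_smul, dotProduct_smul, smul_eq_mul, smul_eq_mul, h1, ← ha]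
  have hre := congrArg Complex.re heq
  simp [Complex.mul_re, haim, hlam] at hre
  have hS0 : S = 0 := by linarith
  have hCμ : C *ᵥ μ = 0 := by
    funext i
    have := (Finset.sum_eq_zero_iff_of_nonneg
      (fun i _ => Complex.normSq_nonneg ((C *ᵥ μ) i))).mp hS0 i (Finset.mem_univ i)
    simpa [Complex.normSq_eq_zero] using this
  have hCC : (Cᴴ * C) *ᵥ μ = 0 := by
    rw [← mulVec_mulVec, hCμ, mulVec_zero]
  have hΩμ : Ω *ᵥ μ = (Complex.I * lam) • μ := by
    have : (-Complex.I) • (Ω *ᵥ μ) = lam • μ := by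
      have := hμ
      rw [hA, sub_mulVec, smul_mulVec, smul_mulVec, hCC, smul_zero,
        sub_zero] at this
      exact this
    have := congrArg (fun v => Complex.I • v) this
    simpa [smul_smul, Complex.I_mul_I] using this
  refine ⟨hCμ, hΩμ, ?_⟩
  have hpow : ∀ k : ℕ, (A ^ k) *ᵥ μ = (lam ^ k) • μ := by
    intro k
    induction k with
    | zero => simp
    | succ k ih =>
      rw [pow_succ, ← mulVec_mulVec, hμ, mulVec_smul, ih, smul_smul, pow_succ]
      ring_nf
  simp only [Submodule.mem_iInf, LinearMap.mem_ker]
  intro k _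
  show (C * A ^ k) *ᵥ μ = 0
  rw [← mulVec_mulVec, hpow, mulVec_smul, hCμ, smul_zero]
end

section
/- Let A ∈ ℂ^{k×k} be a matrix such that A + Aᴴ is negative semidefinite, and let λ ∈ ℂ with Re λ = 0. Then Ker((A - λ I)²) = Ker(A - λ I); that is, a purely imaginary eigenvalue of such a matrix admits no generalized eigenvectors of order two. -/
open Matrix ComplexOrder

/-!
Put `B = A - λ I`. Since `Re λ = 0`, `B + Bᴴ = A + Aᴴ`, so `-(B + Bᴴ)` is positive semidefinite.
If `B² x = 0`, then `y = B x` lies in `ker B`, so the quadratic form of `B + Bᴴ` vanishes at `y`;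
semidefiniteness upgrades this to `(B + Bᴴ) y = 0`, i.e. `Bᴴ y = 0`.
Hence `‖y‖² = ⟨y, B x⟩ = ⟨Bᴴ y, x⟩ = 0`.
-/

namespace Matrix

variable {𝕜 n : Type*} [RCLike 𝕜]

theorem add_conjTranspose_sub_smul_one [DecidableEq n] (A : Matrix n n 𝕜) {lam : 𝕜}
    (hlam : RCLike.re lam = 0) :
    (A - lam • (1 : Matrix n n 𝕜)) + (A - lam • (1 : Matrix n n 𝕜))ᴴ = A + Aᴴ := by
  have hsum : lam + star lam = 0 := by
    rw [RCLike.star_def, RCLike.add_conj, hlam, RCLike.ofReal_zero, mul_zero]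
  rw [conjTranspose_sub, conjTranspose_smul, conjTranspose_one, sub_add_sub_comm, ← add_smul,
    hsum, zero_smul, sub_zero]

variable [Fintype n]

theorem conjTranspose_mulVec_eq_zero_of_mulVec_eq_zero {B : Matrix n n 𝕜}
    (hB : (-(B + Bᴴ)).PosSemidef) {y : n → 𝕜} (hy : B *ᵥ y = 0) : Bᴴ *ᵥ y = 0 := by
  have hform : star y ⬝ᵥ (-(B + Bᴴ)) *ᵥ y = 0 := by
    rw [neg_mulVec, add_mulVec, hy, zero_add, dotProduct_neg, dotProduct_mulVec, ← star_mulVec, hy,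
      star_zero, zero_dotProduct, neg_zero]
  simpa only [neg_mulVec, add_mulVec, hy, zero_add, neg_eq_zero] using (hB.dotProduct_mulVec_zero_iff y).mp hform

theorem ker_mulVecLin_sq_of_posSemidef_neg_add_conjTranspose [DecidableEq n] {B : Matrix n n 𝕜}
    (hB : (-(B + Bᴴ)).PosSemidef) :
    LinearMap.ker (B ^ 2).mulVecLin = LinearMap.ker B.mulVecLin := by
  ext x
  simp only [LinearMap.mem_ker, mulVecLin_apply]
  rw [sq, ← mulVec_mulVec]
  refine ⟨fun hx ↦ ?_, fun hx ↦ by rw [hx, mulVec_zero]⟩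
  have hBy : Bᴴ *ᵥ (B *ᵥ x) = 0 := conjTranspose_mulVec_eq_zero_of_mulVec_eq_zero hB hx
  rw [← dotProduct_star_self_eq_zero]
  calc star (B *ᵥ x) ⬝ᵥ (B *ᵥ x) = star (Bᴴ *ᵥ (B *ᵥ x)) ⬝ᵥ x := by
        rw [star_mulVec Bᴴ, conjTranspose_conjTranspose, ← dotProduct_mulVec]
    _ = 0 := by rw [hBy, star_zero, zero_dotProduct]

end Matrix

theorem no_generalized_imaginary_eigenvectors_general
    (k : ℕ) (A : Matrix (Fin k) (Fin k) ℂ)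
    (hNeg : ∀ x : Fin k → ℂ, star x ⬝ᵥ ((A + Aᴴ) *ᵥ x) ≤ 0)
    (lam : ℂ) (hlam : lam.re = 0) :
    LinearMap.ker (((A - lam • (1 : Matrix (Fin k) (Fin k) ℂ)) ^ 2).mulVecLin) =
      LinearMap.ker ((A - lam • (1 : Matrix (Fin k) (Fin k) ℂ)).mulVecLin) := by
  have hPSD : (-(A + Aᴴ)).PosSemidef :=
    posSemidef_iff_dotProduct_mulVec.mpr ⟨(isHermitian_add_transpose_self A).neg, fun x ↦ by
      simpa only [neg_mulVec, dotProduct_neg, neg_nonneg] using hNeg x⟩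
  apply ker_mulVecLin_sq_of_posSemidef_neg_add_conjTranspose
  rwa [add_conjTranspose_sub_smul_one A hlam]

/-- If `A + Aᴴ` is negative semidefinite (Hermitian with `xᴴ(A+Aᴴ)x ≤ 0` for all `x`)
and `Re λ = 0`, then `Ker((A - λI)²) = Ker(A - λI)`: a purely imaginary eigenvalue
admits no generalized eigenvectors of order two. -/
theorem no_generalized_imaginary_eigenvectors
    (k : ℕ) (hk : 0 < k) (A : Matrix (Fin k) (Fin k) ℂ)
    (hHerm : (A + Aᴴ).IsHermitian)
    (hNeg : ∀ x : Fin k → ℂ, star x ⬝ᵥ ((A + Aᴴ) *ᵥ x) ≤ 0)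
    (lam : ℂ) (hlam : lam.re = 0) :
    LinearMap.ker (((A - lam • (1 : Matrix (Fin k) (Fin k) ℂ)) ^ 2).mulVecLin) =
      LinearMap.ker ((A - lam • (1 : Matrix (Fin k) (Fin k) ℂ)).mulVecLin) :=
  no_generalized_imaginary_eigenvectors_general k A hNeg lam hlam
end

section
/- If μ ∈ ⋂_{k=0}^{n-1} Ker(C A^k) is nonzero and A μ = λ μ for some λ ∈ ℂ, then Re λ = 0; that is, every eigenvalue of A whose eigenvector lies in the unobservable subspace is purely imaginary. -/
open Matrix

/-- For a passive linear quantum system with `A = -iΩ - (1/2)CᴴC` (`Ω` Hermitian):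
every eigenvalue of `A` whose eigenvector lies in the unobservable subspace
`⋂_{k<n} Ker(C Aᵏ)` is purely imaginary. -/
theorem passive_unobservable_eigenvalue_imaginary
    (n m : ℕ) (hn : 0 < n) (hm : 0 < m)
    (Ω : Matrix (Fin n) (Fin n) ℂ) (hΩ : Ω.IsHermitian)
    (C : Matrix (Fin m) (Fin n) ℂ)
    (A : Matrix (Fin n) (Fin n) ℂ)
    (hA : A = (-Complex.I) • Ω - (1 / 2 : ℂ) • (Cᴴ * C))
    (B : Matrix (Fin n) (Fin m) ℂ) (hB : B = -Cᴴ)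
    (μ : Fin n → ℂ) (hμ0 : μ ≠ 0)
    (hμ : μ ∈ ⨅ k ∈ Finset.range n, LinearMap.ker ((C * A ^ k).mulVecLin))
    (lam : ℂ) (heig : A *ᵥ μ = lam • μ) :
    lam.re = 0 := by
  -- μ ∈ Ker C
  have h0 := (Submodule.mem_iInf _).mp hμ 0
  have h0' := (Submodule.mem_iInf _).mp h0 (Finset.mem_range.mpr hn)
  have hC : C *ᵥ μ = 0 := by
    simpa [Matrix.mulVecLin, pow_zero, Matrix.mul_one] using h0'
  have hAμ : A *ᵥ μ = (-Complex.I) • (Ω *ᵥ μ) := by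
    rw [hA]
    simp [Matrix.sub_mulVec, Matrix.smul_mulVec, ← Matrix.mulVec_mulVec, hC,
      Matrix.neg_mulVec]
  set s : ℂ := star μ ⬝ᵥ (Ω *ᵥ μ) with hs
  set N : ℂ := star μ ⬝ᵥ μ with hN
  have hsreal : (starRingEnd ℂ) s = s := by
    rw [hs]
    calc (starRingEnd ℂ) (star μ ⬝ᵥ (Ω *ᵥ μ))
        = star (star μ ⬝ᵥ (Ω *ᵥ μ)) := rfl
      _ = star (Ω *ᵥ μ) ⬝ᵥ μ := by rw [Matrix.star_dotProduct, star_star]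
      _ = (star μ ᵥ* Ωᴴ) ⬝ᵥ μ := by rw [Matrix.star_mulVec]
      _ = star μ ⬝ᵥ (Ωᴴ *ᵥ μ) := by rw [← Matrix.dotProduct_mulVec]
      _ = star μ ⬝ᵥ (Ω *ᵥ μ) := by rw [hΩ.eq]
  have hNval : N = ((∑ i, Complex.normSq (μ i) : ℝ) : ℂ) := by
    rw [hN]
    simp only [dotProduct, Pi.star_apply, RCLike.star_def,
      Complex.normSq_eq_conj_mul_self, Complex.ofReal_sum]
  have hNim : N.im = 0 := by simp [hNval]
  have hkey : lam * N = (-Complex.I) * s := by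
    calc lam * N = star μ ⬝ᵥ (lam • μ) := by
          rw [hN, dotProduct_smul, smul_eq_mul]
      _ = star μ ⬝ᵥ (A *ᵥ μ) := by rw [heig]
      _ = star μ ⬝ᵥ ((-Complex.I) • (Ω *ᵥ μ)) := by rw [hAμ]
      _ = (-Complex.I) * s := by rw [dotProduct_smul, smul_eq_mul, hs]
  have hsim : s.im = 0 := Complex.conj_eq_iff_im.mp hsreal
  have hNre : N.re ≠ 0 := by
    obtain ⟨i, hi⟩ := Function.ne_iff.mp hμ0
    have hpos : 0 < ∑ i, Complex.normSq (μ i) :=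
      Finset.sum_pos' (fun j _ => Complex.normSq_nonneg _)
        ⟨i, Finset.mem_univ i, Complex.normSq_pos.mpr (by simpa using hi)⟩
    simp [hNval]
    exact ne_of_gt hpos
  have := congrArg Complex.re hkey
  simp [Complex.mul_re, Complex.mul_im, hNim, hsim] at this
  rcases this with h | h
  · exact h
  · exact absurd h hNre
end

section
/- If a passive linear quantum system is observable, i.e. ⋂_{k=0}^{n-1} Ker(C A^k) = {0}, then A is Hurwitz stable: every λ in the spectrum of A satisfies Re λ < 0. -/
open Matrix

lemma dot_self_eq (k : ℕ) (v : Fin k → ℂ) :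
    star v ⬝ᵥ v = ((∑ i, Complex.normSq (v i) : ℝ) : ℂ) := by
  simp only [dotProduct, Pi.star_apply, Complex.star_def]
  push_cast
  refine Finset.sum_congr rfl fun i _ => ?_
  rw [mul_comm, Complex.mul_conj]

/-- For a passive linear quantum system with `A = -iΩ - (1/2)CᴴC` (`Ω` Hermitian):
if the system is observable, i.e. `⋂_{k<n} Ker(C Aᵏ) = {0}`, then `A` is Hurwitz stable:
every spectral value of `A` has strictly negative real part. -/
theorem passive_observable_implies_hurwitz
    (n m : ℕ) (hn : 0 < n) (hm : 0 < m)
    (Ω : Matrix (Fin n) (Fin n) ℂ) (hΩ : Ω.IsHermitian)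
    (C : Matrix (Fin m) (Fin n) ℂ)
    (A : Matrix (Fin n) (Fin n) ℂ)
    (hA : A = (-Complex.I) • Ω - (1 / 2 : ℂ) • (Cᴴ * C))
    (B : Matrix (Fin n) (Fin m) ℂ) (hB : B = -Cᴴ)
    (hobs : (⨅ k ∈ Finset.range n, LinearMap.ker ((C * A ^ k).mulVecLin)) = ⊥) :
    ∀ lam ∈ spectrum ℂ A, lam.re < 0 := by
  intro lam hlam
  -- get an eigenvector
  have hspec : lam ∈ spectrum ℂ (Matrix.toLinAlgEquiv' A) := by
    rwa [AlgEquiv.spectrum_eq]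
  have heig := Module.End.HasEigenvalue.exists_hasEigenvector
    (Module.End.hasEigenvalue_iff_mem_spectrum.mpr hspec)
  obtain ⟨v, hv⟩ := heig
  have hv0 : v ≠ 0 := hv.right
  have hAv : A *ᵥ v = lam • v := by
    have h := hv.apply_eq_smul
    rw [show (Matrix.toLinAlgEquiv' A) v = A *ᵥ v from rfl] at h
    exact h
  set w := C *ᵥ v with hw
  -- the key scalar identity
  have hdotA : star v ⬝ᵥ (A *ᵥ v) = lam * (star v ⬝ᵥ v) := by
    rw [hAv, dotProduct_smul, smul_eq_mul]
  have hexp : star v ⬝ᵥ (A *ᵥ v)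
      = (-Complex.I) * (star v ⬝ᵥ (Ω *ᵥ v)) - (1/2 : ℂ) * (star w ⬝ᵥ w) := by
    rw [hA, Matrix.sub_mulVec, Matrix.smul_mulVec, Matrix.smul_mulVec,
      dotProduct_sub, dotProduct_smul, dotProduct_smul, smul_eq_mul, smul_eq_mul]
    congr 1
    rw [← Matrix.mulVec_mulVec, Matrix.dotProduct_mulVec, hw]
    congr 1
    rw [← Matrix.star_mulVec]
  -- Ω-term is real
  have hΩreal : (star v ⬝ᵥ (Ω *ᵥ v)).im = 0 := by
    rw [← Complex.conj_eq_iff_im]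
    calc (starRingEnd ℂ) (star v ⬝ᵥ (Ω *ᵥ v))
        = star (star v ⬝ᵥ (Ω *ᵥ v)) := rfl
      _ = star (Ω *ᵥ v) ⬝ᵥ v := by
          rw [star_dotProduct, star_star]
      _ = (star v ᵥ* Ωᴴ) ⬝ᵥ v := by rw [Matrix.star_mulVec]
      _ = star v ⬝ᵥ (Ωᴴ *ᵥ v) := (Matrix.dotProduct_mulVec _ _ _).symm
      _ = star v ⬝ᵥ (Ω *ᵥ v) := by rw [hΩ.eq]
  set N : ℝ := ∑ i, Complex.normSq (v i) with hN
  set R : ℝ := ∑ i, Complex.normSq (w i) with hR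
  have hNv : star v ⬝ᵥ v = (N : ℂ) := dot_self_eq n v
  have hRw : star w ⬝ᵥ w = (R : ℂ) := dot_self_eq m w
  have hNpos : 0 < N := by
    obtain ⟨i, hi⟩ := Function.ne_iff.mp hv0
    exact Finset.sum_pos' (fun j _ => Complex.normSq_nonneg _)
      ⟨i, Finset.mem_univ i, by simpa using Complex.normSq_pos.mpr hi⟩
  have hRnn : 0 ≤ R := Finset.sum_nonneg fun j _ => Complex.normSq_nonneg _
  -- take real parts
  have hkey : lam.re * N = -(1/2) * R := by
    have h := hexp.symm.trans hdotA
    rw [hNv, hRw] at h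
    have h2 := congrArg Complex.re h
    simp only [Complex.mul_re, Complex.sub_re, Complex.neg_re, Complex.I_re, Complex.I_im,
      Complex.neg_im, Complex.ofReal_re, Complex.ofReal_im, hΩreal] at h2
    norm_num at h2
    linarith [h2]
  -- lam.re ≤ 0; equality forces w = 0
  have hRne : R ≠ 0 := by
    intro hR0
    have hw0 : w = 0 := by
      funext i
      have : Complex.normSq (w i) = 0 := by
        have := Finset.sum_eq_zero_iff_of_nonneg
          (fun j (_ : j ∈ Finset.univ) => Complex.normSq_nonneg (w j)) |>.mp hR0 i (Finset.mem_univ i)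
        exact this
      simpa [Complex.normSq_eq_zero] using this
    -- then C * A^k *ᵥ v = 0 for all k, so v ∈ ⊥
    have hpow : ∀ k : ℕ, A ^ k *ᵥ v = lam ^ k • v := by
      intro k
      induction k with
      | zero => simp
      | succ k ih =>
        rw [pow_succ, ← Matrix.mulVec_mulVec, hAv, Matrix.mulVec_smul, ih,
          smul_smul, pow_succ, mul_comm]
    have hmem : v ∈ (⨅ k ∈ Finset.range n, LinearMap.ker ((C * A ^ k).mulVecLin)) := by
      rw [Submodule.mem_iInf]
      intro k
      rw [Submodule.mem_iInf]
      intro _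
      rw [LinearMap.mem_ker]
      show (C * A ^ k) *ᵥ v = 0
      rw [← Matrix.mulVec_mulVec, hpow, Matrix.mulVec_smul, ← hw, hw0, smul_zero]
    rw [hobs] at hmem
    exact hv0 hmem
  have hRpos : 0 < R := lt_of_le_of_ne hRnn (Ne.symm hRne)
  nlinarith [hkey, hNpos, hRpos]
end

section
/- For a general linear quantum system, the controllable subspace is the image of the observable subspace under multiplication by J_n: Im(C_G) = J_n · Im(O_Gᴴ), where J_n · S denotes the image of the subspace S under the linear map x ↦ J_n x. -/
open Matrix

noncomputable section

/-- `J_k = [I 0; 0 -I]` acting on `ℂ^{2k} = ℂ^k ⊕ ℂ^k`. -/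
def Jmat (k : ℕ) : Matrix (Fin k ⊕ Fin k) (Fin k ⊕ Fin k) ℂ :=
  Matrix.fromBlocks 1 0 0 (-1)

/-- Entrywise complex conjugation of a matrix. -/
def mconj {α β : Type} (M : Matrix α β ℂ) : Matrix α β ℂ :=
  M.map (starRingEnd ℂ)

/-- The doubled-up matrix `Δ(U,V) = [U V; conj V  conj U]`. -/
def doubledUp {k r : ℕ} (U V : Matrix (Fin k) (Fin r) ℂ) :
    Matrix (Fin k ⊕ Fin k) (Fin r ⊕ Fin r) ℂ :=
  Matrix.fromBlocks U V (mconj V) (mconj U)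

/-- The ♭-adjoint `X♭ = J_r Xᴴ J_k` of `X ∈ ℂ^{2k×2r}`. -/
def flat {k r : ℕ} (X : Matrix (Fin k ⊕ Fin k) (Fin r ⊕ Fin r) ℂ) :
    Matrix (Fin r ⊕ Fin r) (Fin k ⊕ Fin k) ℂ :=
  Jmat r * Xᴴ * Jmat k

/-- Orthogonal complement of a subspace of `ℂ^ι` w.r.t. the standard Hermitian
inner product `⟪y, x⟫ = (star y) ⬝ᵥ x`. -/
def orthComp {ι : Type} [Fintype ι] (S : Submodule ℂ (ι → ℂ)) : Submodule ℂ (ι → ℂ) where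
  carrier := {x | ∀ y ∈ S, star y ⬝ᵥ x = 0}
  add_mem' := by
    intro a b ha hb y hy
    simp only [Set.mem_setOf_eq] at *
    rw [dotProduct_add, ha y hy, hb y hy, add_zero]
  zero_mem' := by
    intro y hy
    simp
  smul_mem' := by
    intro c x hx y hy
    simp only [Set.mem_setOf_eq] at *
    rw [dotProduct_smul, hx y hy, smul_zero]

/-- The controllable subspace `Im(C_G) = ∑_{k<2n} Im(𝒜ᵏℬ)`. -/
def ctrbSub (n m : ℕ) (𝒜 : Matrix (Fin n ⊕ Fin n) (Fin n ⊕ Fin n) ℂ)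
    (ℬ : Matrix (Fin n ⊕ Fin n) (Fin m ⊕ Fin m) ℂ) : Submodule ℂ (Fin n ⊕ Fin n → ℂ) :=
  ⨆ k ∈ Finset.range (2 * n), LinearMap.range ((𝒜 ^ k * ℬ).mulVecLin)

/-- The unobservable subspace `Ker(O_G) = ⋂_{k<2n} Ker(𝒞𝒜ᵏ)`. -/
def unobsSub (n m : ℕ) (𝒜 : Matrix (Fin n ⊕ Fin n) (Fin n ⊕ Fin n) ℂ)
    (𝒞 : Matrix (Fin m ⊕ Fin m) (Fin n ⊕ Fin n) ℂ) : Submodule ℂ (Fin n ⊕ Fin n → ℂ) :=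
  ⨅ k ∈ Finset.range (2 * n), LinearMap.ker ((𝒞 * 𝒜 ^ k).mulVecLin)


/-!
Since `Ω` is Hermitian, `𝒜♭ = J 𝒜ᴴ J = -𝒜 + ℬ𝒞`. By duality, the observable subspace is the
controllable (Krylov) subspace of the pair `(𝒜ᴴ, 𝒞ᴴ)`; conjugating by `J` turns it into that of
`(𝒜♭, J𝒞ᴴ)`, and `J𝒞ᴴ = -ℬJ_m` has the same range as `ℬ`. Krylov subspaces generated by
`Im ℬ` do not change when the drift is negated or perturbed by a feedback term `ℬ𝒞`, so the
controllable subspaces of `(𝒜♭, ℬ)` and `(𝒜, ℬ)` agree.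
-/

section Krylov

variable {R M : Type*} [Ring R] [AddCommGroup M] [Module R M]

def krylovSubspace (f : Module.End R M) (p : Submodule R M) (k : ℕ) : Submodule R M :=
  ⨆ i < k, p.map (f ^ i)

lemma krylovSubspace_succ (f : Module.End R M) (p : Submodule R M) (k : ℕ) :
    krylovSubspace f p (k + 1) = p ⊔ (krylovSubspace f p k).map f := by
  simp only [krylovSubspace, Nat.iSup_lt_succ', pow_zero, Module.End.one_eq_id, Submodule.map_id,
    Submodule.map_iSup, pow_succ', Module.End.mul_eq_comp, Submodule.map_comp]

lemma krylovSubspace_add_le (f g : Module.End R M) {p : Submodule R M}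
    (hg : LinearMap.range g ≤ p) (k : ℕ) :
    krylovSubspace (f + g) p k ≤ krylovSubspace f p k := by
  induction k with
  | zero => simp [krylovSubspace]
  | succ k ih =>
    rw [krylovSubspace_succ, krylovSubspace_succ]
    calc p ⊔ (krylovSubspace (f + g) p k).map (f + g)
        ≤ p ⊔ ((krylovSubspace f p k).map f ⊔ (krylovSubspace f p k).map g) :=
          sup_le_sup_left ((Submodule.map_mono ih).trans (Submodule.map_add_le _ _ _)) _
      _ ≤ p ⊔ (krylovSubspace f p k).map f :=
          sup_le le_sup_left
            (sup_le le_sup_right (LinearMap.map_le_range.trans (hg.trans le_sup_left)))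

lemma krylovSubspace_add_of_range_le (f g : Module.End R M) {p : Submodule R M}
    (hg : LinearMap.range g ≤ p) (k : ℕ) :
    krylovSubspace (f + g) p k = krylovSubspace f p k := by
  refine le_antisymm (krylovSubspace_add_le f g hg k) ?_
  simpa using krylovSubspace_add_le (f + g) (-g) (by rwa [LinearMap.range_neg]) k

lemma krylovSubspace_neg (f : Module.End R M) (p : Submodule R M) (k : ℕ) :
    krylovSubspace (-f) p k = krylovSubspace f p k := by
  refine iSup_congr fun i => iSup_congr fun _ => ?_
  rcases neg_one_pow_eq_or (Module.End R M) i with h | h <;>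
    simp [neg_pow, h, Submodule.map_neg]

lemma map_krylovSubspace_of_semiconjBy {e f f' : Module.End R M} (h : SemiconjBy e f f')
    (p : Submodule R M) (k : ℕ) :
    (krylovSubspace f p k).map e = krylovSubspace f' (p.map e) k := by
  simp only [krylovSubspace, Submodule.map_iSup, ← Submodule.map_comp, ← Module.End.mul_eq_comp,
    (h.pow_right _).eq]

end Krylov

section OrthComp

open scoped ComplexOrder

variable {ι : Type} [Fintype ι]

lemma orthComp_eq_comap_orthogonal (S : Submodule ℂ (ι → ℂ)) :
    orthComp S = ((S.map (WithLp.linearEquiv 2 ℂ (ι → ℂ)).symm.toLinearMap)ᗮ).comap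
      (WithLp.linearEquiv 2 ℂ (ι → ℂ)).symm.toLinearMap := by
  ext x
  simp only [Submodule.mem_comap, Submodule.mem_orthogonal, Submodule.mem_map,
    forall_exists_index, and_imp, forall_apply_eq_imp_iff₂]
  exact forall₂_congr fun y _ => by rw [dotProduct_comm]; rfl

lemma orthComp_orthComp (S : Submodule ℂ (ι → ℂ)) : orthComp (orthComp S) = S := by
  let e := (WithLp.linearEquiv 2 ℂ (ι → ℂ)).symm.toLinearMap
  rw [orthComp_eq_comap_orthogonal, orthComp_eq_comap_orthogonal,
    Submodule.map_comap_eq_of_surjective (f := e) (LinearEquiv.surjective _),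
    Submodule.orthogonal_orthogonal, Submodule.comap_map_eq_of_injective (f := e)
    (LinearEquiv.injective _)]

lemma orthComp_iSup {κ : Sort*} (S : κ → Submodule ℂ (ι → ℂ)) :
    orthComp (⨆ i, S i) = ⨅ i, orthComp (S i) := by
  simp only [orthComp_eq_comap_orthogonal, Submodule.map_iSup, (Submodule.orthogonal_gc ℂ _).l_iSup]
  exact Submodule.comap_iInf _ _

lemma ker_mulVecLin_eq_orthComp_range {κ : Type} [Fintype κ] (M : Matrix κ ι ℂ) :
    LinearMap.ker M.mulVecLin = orthComp (LinearMap.range Mᴴ.mulVecLin) := by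
  have key : ∀ x z, star (Mᴴ *ᵥ z) ⬝ᵥ x = star z ⬝ᵥ (M *ᵥ x) := fun x z => by
    rw [star_mulVec, conjTranspose_conjTranspose, dotProduct_mulVec]
  ext x
  simp only [LinearMap.mem_ker, mulVecLin_apply, orthComp, Submodule.mem_mk,
    AddSubmonoid.mem_mk, AddSubsemigroup.mem_mk, Set.mem_setOf_eq, LinearMap.mem_range,
    forall_exists_index, forall_apply_eq_imp_iff, key]
  refine ⟨fun h z => by rw [h, dotProduct_zero], fun h => ?_⟩
  exact dotProduct_star_self_eq_zero.mp (h (M *ᵥ x))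

lemma orthComp_iInf_ker {α : Type*} {κ : Type} [Fintype κ] (s : Finset α)
    (M : α → Matrix κ ι ℂ) :
    orthComp (⨅ k ∈ s, LinearMap.ker (M k).mulVecLin) =
      ⨆ k ∈ s, LinearMap.range (M k)ᴴ.mulVecLin := by
  simp only [ker_mulVecLin_eq_orthComp_range, ← orthComp_iSup, orthComp_orthComp]

end OrthComp

section Flat

lemma Jmat_mul_Jmat (k : ℕ) : Jmat k * Jmat k = 1 := by
  rw [Jmat, fromBlocks_multiply, ← fromBlocks_one]
  congr 1 <;> simp

lemma Jmat_conjTranspose (k : ℕ) : (Jmat k)ᴴ = Jmat k := by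
  rw [Jmat, fromBlocks_conjTranspose]
  congr 1 <;> simp

lemma Jmat_mul_Jmat_mul {k : ℕ} {ι : Type} (X : Matrix (Fin k ⊕ Fin k) ι ℂ) :
    Jmat k * (Jmat k * X) = X := by
  rw [← Matrix.mul_assoc, Jmat_mul_Jmat, Matrix.one_mul]

variable {k r s : ℕ}

lemma flat_mul (X : Matrix (Fin k ⊕ Fin k) (Fin r ⊕ Fin r) ℂ)
    (Y : Matrix (Fin r ⊕ Fin r) (Fin s ⊕ Fin s) ℂ) : flat (X * Y) = flat Y * flat X := by
  simp only [flat, conjTranspose_mul, Matrix.mul_assoc, Jmat_mul_Jmat_mul]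

lemma flat_flat (X : Matrix (Fin k ⊕ Fin k) (Fin r ⊕ Fin r) ℂ) : flat (flat X) = X := by
  simp only [flat, conjTranspose_mul, conjTranspose_conjTranspose, Jmat_conjTranspose,
    Matrix.mul_assoc, Jmat_mul_Jmat, Matrix.mul_one, Jmat_mul_Jmat_mul]

lemma flat_sub (X Y : Matrix (Fin k ⊕ Fin k) (Fin r ⊕ Fin r) ℂ) :
    flat (X - Y) = flat X - flat Y := by
  simp only [flat, conjTranspose_sub, Matrix.mul_sub, Matrix.sub_mul]

lemma flat_smul (c : ℂ) (X : Matrix (Fin k ⊕ Fin k) (Fin r ⊕ Fin r) ℂ) :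
    flat (c • X) = star c • flat X := by
  simp only [flat, conjTranspose_smul, Matrix.mul_smul, Matrix.smul_mul]

lemma flat_Jmat : flat (Jmat k) = Jmat k := by
  rw [flat, Jmat_conjTranspose, Jmat_mul_Jmat, Matrix.one_mul]

/-- The Hamiltonian part `-iJΩ` of the drift is ♭-skew, the damping part `-(1/2)𝒞♭𝒞` is
♭-symmetric. -/
lemma flat_drift {n m : ℕ} {Ω : Matrix (Fin n ⊕ Fin n) (Fin n ⊕ Fin n) ℂ} (hΩ : Ω.IsHermitian)
    (𝒞 : Matrix (Fin m ⊕ Fin m) (Fin n ⊕ Fin n) ℂ) :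
    flat ((-Complex.I) • (Jmat n * Ω) - (1 / 2 : ℂ) • (flat 𝒞 * 𝒞)) =
      -((-Complex.I) • (Jmat n * Ω) - (1 / 2 : ℂ) • (flat 𝒞 * 𝒞)) - flat 𝒞 * 𝒞 := by
  have hJΩ : flat (Jmat n * Ω) = Jmat n * Ω := by
    rw [flat_mul, flat_Jmat, flat, hΩ.eq, Matrix.mul_assoc, Jmat_mul_Jmat, Matrix.mul_one]
  have hstar : star (-Complex.I) = Complex.I := by simp
  rw [flat_sub, flat_smul, flat_smul, hJΩ, flat_mul, flat_flat, hstar]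
  simp only [star_div₀, star_one, star_ofNat]
  module

end Flat

namespace Matrix

variable {R ι κ : Type*} [CommRing R] [Fintype ι]

lemma mulVecLin_neg (M : Matrix κ ι R) : (-M).mulVecLin = -M.mulVecLin :=
  LinearMap.ext fun _ => neg_mulVec _ _

lemma mulVecLin_pow [DecidableEq ι] (A : Matrix ι ι R) (k : ℕ) :
    (A ^ k).mulVecLin = A.mulVecLin ^ k :=
  toLin'_pow A k

end Matrix

section LinearQuantumSystem


lemma range_mulVecLin_mul_Jmat {ι : Type} {k : ℕ} (M : Matrix ι (Fin k ⊕ Fin k) ℂ) :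
    LinearMap.range (M * Jmat k).mulVecLin = LinearMap.range M.mulVecLin := by
  refine (mulVecLin_mul M (Jmat k)).symm ▸ LinearMap.range_comp_of_range_eq_top _ ?_
  exact LinearMap.range_eq_top.mpr fun v => ⟨Jmat k *ᵥ v, by simp [Jmat_mul_Jmat]⟩

variable (n m : ℕ) (𝒜 : Matrix (Fin n ⊕ Fin n) (Fin n ⊕ Fin n) ℂ)

lemma ctrbSub_eq_krylovSubspace (ℬ : Matrix (Fin n ⊕ Fin n) (Fin m ⊕ Fin m) ℂ) :
    ctrbSub n m 𝒜 ℬ = krylovSubspace 𝒜.mulVecLin (LinearMap.range ℬ.mulVecLin) (2 * n) := by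
  simp only [ctrbSub, krylovSubspace, Finset.mem_range, mulVecLin_mul, LinearMap.range_comp,
    mulVecLin_pow]

lemma orthComp_unobsSub_eq_krylovSubspace (𝒞 : Matrix (Fin m ⊕ Fin m) (Fin n ⊕ Fin n) ℂ) :
    orthComp (unobsSub n m 𝒜 𝒞) =
      krylovSubspace 𝒜ᴴ.mulVecLin (LinearMap.range 𝒞ᴴ.mulVecLin) (2 * n) := by
  rw [unobsSub, orthComp_iInf_ker]
  simp only [krylovSubspace, Finset.mem_range, conjTranspose_mul, conjTranspose_pow, mulVecLin_mul,
    LinearMap.range_comp, mulVecLin_pow]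

end LinearQuantumSystem

theorem ctrb_eq_Jn_image_obs_general
    (n m : ℕ)
    (Ω : Matrix (Fin n ⊕ Fin n) (Fin n ⊕ Fin n) ℂ)
    (hΩH : Ω.IsHermitian)
    (𝒞 : Matrix (Fin m ⊕ Fin m) (Fin n ⊕ Fin n) ℂ)
    (𝒜 : Matrix (Fin n ⊕ Fin n) (Fin n ⊕ Fin n) ℂ)
    (h𝒜 : 𝒜 = (-Complex.I) • (Jmat n * Ω) - (1 / 2 : ℂ) • (flat 𝒞 * 𝒞))
    (ℬ : Matrix (Fin n ⊕ Fin n) (Fin m ⊕ Fin m) ℂ) (hℬ : ℬ = -flat 𝒞) :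
    ctrbSub n m 𝒜 ℬ =
      Submodule.map (Jmat n).mulVecLin (orthComp (unobsSub n m 𝒜 𝒞)) := by
  have hflat : flat 𝒜 = -𝒜 + ℬ * 𝒞 := by
    rw [hℬ, h𝒜, flat_drift hΩH, Matrix.neg_mul, sub_eq_add_neg]
  have hsemiconj : SemiconjBy (Jmat n).mulVecLin 𝒜ᴴ.mulVecLin (flat 𝒜).mulVecLin := by
    rw [SemiconjBy, Module.End.mul_eq_comp, Module.End.mul_eq_comp, ← mulVecLin_mul,
      ← mulVecLin_mul, flat, Matrix.mul_assoc, Jmat_mul_Jmat, Matrix.mul_one]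
  have hrange : (LinearMap.range 𝒞ᴴ.mulVecLin).map (Jmat n).mulVecLin =
      LinearMap.range ℬ.mulVecLin := by
    rw [← LinearMap.range_comp, ← mulVecLin_mul, ← range_mulVecLin_mul_Jmat ℬ, hℬ, flat,
      Matrix.neg_mul, mulVecLin_neg, LinearMap.range_neg, Matrix.mul_assoc, Jmat_mul_Jmat,
      Matrix.mul_one]
  have hfeedback : LinearMap.range (ℬ * 𝒞).mulVecLin ≤ LinearMap.range ℬ.mulVecLin := by
    rw [mulVecLin_mul]
    exact LinearMap.range_comp_le_range _ _
  rw [ctrbSub_eq_krylovSubspace, orthComp_unobsSub_eq_krylovSubspace,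
    map_krylovSubspace_of_semiconjBy hsemiconj, hrange, hflat, mulVecLin_add, mulVecLin_neg,
    krylovSubspace_add_of_range_le _ _ hfeedback, krylovSubspace_neg]

/-- **Lemma 1, Eq. (12).** For a general linear quantum system
(`𝒜 = -iJ_nΩ - (1/2)𝒞♭𝒞`, `ℬ = -𝒞♭`, with `Ω` Hermitian doubled-up and `𝒞` doubled-up),
the controllable subspace is the image under `J_n` of the observable subspace:
`Im(C_G) = J_n · Im(O_Gᴴ)`. -/
theorem ctrb_eq_Jn_image_obs
    (n m : ℕ) (hn : 0 < n) (hm : 0 < m)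
    (Ωm Ωp : Matrix (Fin n) (Fin n) ℂ) (Cm Cp : Matrix (Fin m) (Fin n) ℂ)
    (Ω : Matrix (Fin n ⊕ Fin n) (Fin n ⊕ Fin n) ℂ) (hΩ : Ω = doubledUp Ωm Ωp)
    (hΩH : Ω.IsHermitian)
    (𝒞 : Matrix (Fin m ⊕ Fin m) (Fin n ⊕ Fin n) ℂ) (h𝒞 : 𝒞 = doubledUp Cm Cp)
    (𝒜 : Matrix (Fin n ⊕ Fin n) (Fin n ⊕ Fin n) ℂ)
    (h𝒜 : 𝒜 = (-Complex.I) • (Jmat n * Ω) - (1 / 2 : ℂ) • (flat 𝒞 * 𝒞))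
    (ℬ : Matrix (Fin n ⊕ Fin n) (Fin m ⊕ Fin m) ℂ) (hℬ : ℬ = -flat 𝒞) :
    ctrbSub n m 𝒜 ℬ =
      Submodule.map (Jmat n).mulVecLin (orthComp (unobsSub n m 𝒜 𝒞)) :=
  ctrb_eq_Jn_image_obs_general n m Ω hΩH 𝒞 𝒜 h𝒜 ℬ hℬ

end
end

section
/- For a general linear quantum system, if the stacked vector [x₁; x₂] (with x₁, x₂ ∈ ℂ^n) belongs to the controllable subspace Im(C_G), then the vector [x₁ + conj(x₂); x₂ + conj(x₁)] also belongs to Im(C_G). -/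
open Matrix

noncomputable section

/-!
The antilinear involution `v ↦ conj (Σ v)`, where `Σ = [0 I; I 0]` swaps the two halves of
`ℂ^{2n}`, commutes with every doubled-up matrix, because a matrix `X` is doubled-up exactly when
`conj X = Σ X Σ`. The doubled-up matrices are closed under products, differences, real scalars and
`♭`, and `-i J_n = Δ(-i I, 0)`; so `𝒜` and `ℬ` are doubled-up and the involution preserves every
`Im(𝒜ᵏℬ)`, hence `Im(C_G)`. The vector in question is `v + conj (Σ v)` for `v = [x₁; x₂]`.
-/

variable {ι κ ν : Type}

@[simp]
theorem mconj_apply {α β : Type} (M : Matrix α β ℂ) (i : α) (j : β) :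
    mconj M i j = star (M i j) := rfl

theorem mconj_mul {α β γ : Type} [Fintype β] (A : Matrix α β ℂ) (B : Matrix β γ ℂ) :
    mconj (A * B) = mconj A * mconj B :=
  Matrix.map_mul

theorem mconj_sub {α β : Type} (A B : Matrix α β ℂ) : mconj (A - B) = mconj A - mconj B := by
  ext; simp

theorem mconj_neg {α β : Type} (A : Matrix α β ℂ) : mconj (-A) = -mconj A := by
  ext; simp

theorem mconj_smul {α β : Type} (c : ℂ) (A : Matrix α β ℂ) :
    mconj (c • A) = star c • mconj A := by
  ext; simp

theorem mconj_conjTranspose {α β : Type} (A : Matrix α β ℂ) : mconj Aᴴ = (mconj A)ᴴ := by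
  ext; simp

theorem mconj_mconj {α β : Type} (A : Matrix α β ℂ) : mconj (mconj A) = A := by
  ext; simp

theorem mconj_Jmat (k : ℕ) : mconj (Jmat k) = Jmat k := by
  ext (i | i) (j | j) <;> simp [Jmat, one_apply, apply_ite]

theorem Jmat_submatrix_swap (k : ℕ) : (Jmat k).submatrix Sum.swap Sum.swap = -Jmat k := by
  simp [Jmat, fromBlocks_neg]

/-- `conj X = Σ X Σ` with `Σ` the block swap; for `Fin` indices these are exactly the
matrices `Δ(U, V)`. -/
def IsDoubledUp (X : Matrix (ι ⊕ ι) (κ ⊕ κ) ℂ) : Prop :=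
  mconj X = X.submatrix Sum.swap Sum.swap

theorem isDoubledUp_doubledUp {k r : ℕ} (U V : Matrix (Fin k) (Fin r) ℂ) :
    IsDoubledUp (doubledUp U V) := by
  rw [IsDoubledUp, doubledUp, fromBlocks_submatrix_sum_swap_sum_swap, mconj, fromBlocks_map,
    ← mconj, ← mconj, ← mconj, ← mconj, mconj_mconj, mconj_mconj]

theorem isDoubledUp_neg_I_smul_Jmat (k : ℕ) : IsDoubledUp ((-Complex.I) • Jmat k) := by
  rw [IsDoubledUp, mconj_smul, mconj_Jmat, submatrix_smul, Pi.smul_apply, Pi.smul_apply,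
    Jmat_submatrix_swap]
  simp

namespace IsDoubledUp

theorem mul [Fintype κ] {X : Matrix (ι ⊕ ι) (κ ⊕ κ) ℂ} {Y : Matrix (κ ⊕ κ) (ν ⊕ ν) ℂ}
    (hX : IsDoubledUp X) (hY : IsDoubledUp Y) : IsDoubledUp (X * Y) := by
  rw [IsDoubledUp, mconj_mul, hX, hY]
  exact submatrix_mul_equiv X Y Sum.swap (Equiv.sumComm κ κ) Sum.swap

theorem sub {X Y : Matrix (ι ⊕ ι) (κ ⊕ κ) ℂ} (hX : IsDoubledUp X) (hY : IsDoubledUp Y) :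
    IsDoubledUp (X - Y) := by
  rw [IsDoubledUp, mconj_sub, hX, hY, submatrix_sub]
  rfl

theorem neg {X : Matrix (ι ⊕ ι) (κ ⊕ κ) ℂ} (hX : IsDoubledUp X) : IsDoubledUp (-X) := by
  rw [IsDoubledUp, mconj_neg, hX, submatrix_neg]
  rfl

theorem smul {c : ℂ} (hc : star c = c) {X : Matrix (ι ⊕ ι) (κ ⊕ κ) ℂ} (hX : IsDoubledUp X) :
    IsDoubledUp (c • X) := by
  rw [IsDoubledUp, mconj_smul, hc, hX, submatrix_smul]
  rfl

theorem conjTranspose {X : Matrix (ι ⊕ ι) (κ ⊕ κ) ℂ} (hX : IsDoubledUp X) :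
    IsDoubledUp Xᴴ := by
  rw [IsDoubledUp, mconj_conjTranspose, hX, conjTranspose_submatrix]

theorem flat {k r : ℕ} {X : Matrix (Fin k ⊕ Fin k) (Fin r ⊕ Fin r) ℂ} (hX : IsDoubledUp X) :
    IsDoubledUp (flat X) := by
  rw [IsDoubledUp, _root_.flat, mconj_mul, mconj_mul, mconj_Jmat, mconj_Jmat, hX.conjTranspose,
    ← submatrix_mul_equiv _ _ _ (Equiv.sumComm (Fin k) (Fin k)),
    ← submatrix_mul_equiv _ _ _ (Equiv.sumComm (Fin r) (Fin r))]
  simp [Jmat_submatrix_swap]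

theorem pow [Fintype ι] [DecidableEq ι] {X : Matrix (ι ⊕ ι) (ι ⊕ ι) ℂ} (hX : IsDoubledUp X)
    (k : ℕ) : IsDoubledUp (X ^ k) := by
  induction k with
  | zero =>
    rw [pow_zero, IsDoubledUp]
    ext i j
    simp [one_apply, Sum.swap_leftInverse.injective.eq_iff]
  | succ k ih => exact pow_succ X k ▸ ih.mul hX

end IsDoubledUp

def conjSwap : (ι ⊕ ι → ℂ) →ₗ⋆[ℂ] (ι ⊕ ι → ℂ) where
  toFun v := star (v ∘ Sum.swap)
  map_add' _ _ := by ext; simp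
  map_smul' _ _ := by ext; simp

theorem conjSwap_apply (v : ι ⊕ ι → ℂ) (i : ι ⊕ ι) : conjSwap v i = star (v i.swap) := rfl

theorem IsDoubledUp.conjSwap_mulVec [Fintype κ] {X : Matrix (ι ⊕ ι) (κ ⊕ κ) ℂ}
    (hX : IsDoubledUp X) (u : κ ⊕ κ → ℂ) : conjSwap (X *ᵥ u) = X *ᵥ conjSwap u := by
  ext i
  have hXij : ∀ j, star (X i.swap j) = X i j.swap := fun j => by
    simpa using congr_fun₂ hX i.swap j
  simp only [conjSwap_apply, mulVec, dotProduct, star_sum, star_mul', hXij]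
  simpa using ((Equiv.sumComm κ κ).sum_comp fun j => X i j.swap * star (u j)).symm

theorem conjSwap_mem_iSup_range {τ : Type} [Fintype κ] {M : τ → Matrix (ι ⊕ ι) (κ ⊕ κ) ℂ}
    (hM : ∀ t, IsDoubledUp (M t)) (s : Finset τ) {v : ι ⊕ ι → ℂ}
    (hv : v ∈ ⨆ t ∈ s, LinearMap.range (M t).mulVecLin) :
    conjSwap v ∈ ⨆ t ∈ s, LinearMap.range (M t).mulVecLin := by
  let S := ⨆ t ∈ s, LinearMap.range (M t).mulVecLin
  have hS : S ≤ S.comap conjSwap := iSup₂_le fun t ht => by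
    rintro _ ⟨u, rfl⟩
    rw [Submodule.mem_comap, mulVecLin_apply, (hM t).conjSwap_mulVec]
    exact (le_iSup₂ (f := fun t (_ : t ∈ s) => LinearMap.range (M t).mulVecLin) t ht) ⟨_, rfl⟩
  exact hS hv

theorem conjSwap_mem_ctrbSub {n m : ℕ} {𝒜 : Matrix (Fin n ⊕ Fin n) (Fin n ⊕ Fin n) ℂ}
    {ℬ : Matrix (Fin n ⊕ Fin n) (Fin m ⊕ Fin m) ℂ} (h𝒜 : IsDoubledUp 𝒜) (hℬ : IsDoubledUp ℬ)
    {v : Fin n ⊕ Fin n → ℂ} (hv : v ∈ ctrbSub n m 𝒜 ℬ) : conjSwap v ∈ ctrbSub n m 𝒜 ℬ :=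
  conjSwap_mem_iSup_range (fun k => (h𝒜.pow k).mul hℬ) _ hv

theorem ctrb_closed_under_conj_swap_general
    (n m : ℕ)
    (Ωm Ωp : Matrix (Fin n) (Fin n) ℂ) (Cm Cp : Matrix (Fin m) (Fin n) ℂ)
    (Ω : Matrix (Fin n ⊕ Fin n) (Fin n ⊕ Fin n) ℂ) (hΩ : Ω = doubledUp Ωm Ωp)
    (𝒞 : Matrix (Fin m ⊕ Fin m) (Fin n ⊕ Fin n) ℂ) (h𝒞 : 𝒞 = doubledUp Cm Cp)
    (𝒜 : Matrix (Fin n ⊕ Fin n) (Fin n ⊕ Fin n) ℂ)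
    (h𝒜 : 𝒜 = (-Complex.I) • (Jmat n * Ω) - (1 / 2 : ℂ) • (flat 𝒞 * 𝒞))
    (ℬ : Matrix (Fin n ⊕ Fin n) (Fin m ⊕ Fin m) ℂ) (hℬ : ℬ = -flat 𝒞)
    (x₁ x₂ : Fin n → ℂ) (hx : Sum.elim x₁ x₂ ∈ ctrbSub n m 𝒜 ℬ) :
    Sum.elim (x₁ + star x₂) (x₂ + star x₁) ∈ ctrbSub n m 𝒜 ℬ := by
  have hΩ' : IsDoubledUp Ω := hΩ ▸ isDoubledUp_doubledUp Ωm Ωp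
  have h𝒞' : IsDoubledUp 𝒞 := h𝒞 ▸ isDoubledUp_doubledUp Cm Cp
  have h𝒜' : IsDoubledUp 𝒜 := by
    rw [h𝒜, ← smul_mul_assoc]
    exact ((isDoubledUp_neg_I_smul_Jmat n).mul hΩ').sub ((h𝒞'.flat.mul h𝒞').smul (by norm_num))
  have hℬ' : IsDoubledUp ℬ := hℬ ▸ h𝒞'.flat.neg
  convert add_mem hx (conjSwap_mem_ctrbSub h𝒜' hℬ' hx) using 1
  ext (i | i) <;> simp [conjSwap_apply]

/-- **Lemma 4.** For a general linear quantum system, if `[x₁; x₂] ∈ Im(C_G)` then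
`[x₁ + conj x₂; x₂ + conj x₁] ∈ Im(C_G)`. -/
theorem ctrb_closed_under_conj_swap
    (n m : ℕ) (hn : 0 < n) (hm : 0 < m)
    (Ωm Ωp : Matrix (Fin n) (Fin n) ℂ) (Cm Cp : Matrix (Fin m) (Fin n) ℂ)
    (Ω : Matrix (Fin n ⊕ Fin n) (Fin n ⊕ Fin n) ℂ) (hΩ : Ω = doubledUp Ωm Ωp)
    (hΩH : Ω.IsHermitian)
    (𝒞 : Matrix (Fin m ⊕ Fin m) (Fin n ⊕ Fin n) ℂ) (h𝒞 : 𝒞 = doubledUp Cm Cp)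
    (𝒜 : Matrix (Fin n ⊕ Fin n) (Fin n ⊕ Fin n) ℂ)
    (h𝒜 : 𝒜 = (-Complex.I) • (Jmat n * Ω) - (1 / 2 : ℂ) • (flat 𝒞 * 𝒞))
    (ℬ : Matrix (Fin n ⊕ Fin n) (Fin m ⊕ Fin m) ℂ) (hℬ : ℬ = -flat 𝒞)
    (x₁ x₂ : Fin n → ℂ) (hx : Sum.elim x₁ x₂ ∈ ctrbSub n m 𝒜 ℬ) :
    Sum.elim (x₁ + star x₂) (x₂ + star x₁) ∈ ctrbSub n m 𝒜 ℬ :=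
  ctrb_closed_under_conj_swap_general n m Ωm Ωp Cm Cp Ω hΩ 𝒞 h𝒞 𝒜 h𝒜 ℬ hℬ x₁ x₂ hx
end
end
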